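/- Let p ∈ ℕ and μ ∈ H^{2p+3}((0,1),ℝ) with μ^{(2n+1)}(0)=μ^{(2n+1)}(1)=0 for all n=0,…,p−1. Then, as j → ∞, ⟨μφ₁,φ_j⟩ = ((−1)^p 2(2p+2)/(π^{2p+2} j^{2p+3}))·((−1)^{j+1}μ^{(2p+1)}(1) − μ^{(2p+1)}(0)) + o(1/j^{2p+3}). Consequently, if J ⊂ ℕ* contains an infinite set of even integers and an infinite set of odd integers, then the condition 'there exists c>0 such that |⟨μφ₁,φ_j⟩| ≥ c/j^{2p+3} for all j ∈ J' holds if and only if μ^{(2p+1)}(0)+μ^{(2p+1)}(1) ≠ 0, μ^{(2p+1)}(0)−μ^{(2p+1)}(1) ≠ 0, and ⟨μφ₁,φ_j⟩ ≠ 0 for all j ∈ J. -/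

import Mathlib

open MeasureTheory Real Set Filter Topology

noncomputable section

/-- Eigenvalues `λ_j = (jπ)²` of the Dirichlet Laplacian on `(0,1)`. -/
def lam (j : ℕ) : ℝ := ((j : ℝ) * π) ^ 2

/-- Eigenfunctions `φ_j(x) = √2 sin(jπx)`. -/
def phi (j : ℕ) (x : ℝ) : ℝ := Real.sqrt 2 * Real.sin ((j : ℝ) * π * x)

/-- Membership in `H^s_{(0)}(0,1)`, expressed on Fourier coefficients
`c j = ⟨ψ, φ_j⟩` (modes are indexed by `j ≥ 1`; the `j = 0` term carries weight `0`). -/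
def MemH (s : ℝ) (c : ℕ → ℂ) : Prop :=
  Summable fun j : ℕ => ((j : ℝ) ^ s * ‖c j‖) ^ 2

/-- The `H^s_{(0)}(0,1)` norm on Fourier coefficients. -/
def HNorm (s : ℝ) (c : ℕ → ℂ) : ℝ :=
  Real.sqrt (∑' j : ℕ, ((j : ℝ) ^ s * ‖c j‖) ^ 2)

/-- The `L²(0,1)` hermitian product `⟨f,g⟩ = ∫ f ḡ` on Fourier coefficients. -/
def inner2 (c d : ℕ → ℂ) : ℂ := ∑' j : ℕ, c j * (starRingEnd ℂ) (d j)

/-- Coefficients of the ground state `φ₁`. -/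
def e1 : ℕ → ℂ := fun j => if j = 1 then 1 else 0

/-- Coefficients of `ψ₁(t) = φ₁ e^{-iλ₁ t}`. -/
def gs (t : ℝ) : ℕ → ℂ :=
  fun j => if j = 1 then Complex.exp (-Complex.I * ((lam 1 : ℝ) : ℂ) * (t : ℂ)) else 0

/-- Orthogonal projection onto `H_J = span{φ_j : j ∈ J}`, on coefficients. -/
def projJ (J : Set ℕ) (c : ℕ → ℂ) : ℕ → ℂ := J.indicator c

/-- `⟨μ φ₁, φ_j⟩`. -/
def muCoef (μ : ℝ → ℝ) (j : ℕ) : ℝ := ∫ x in (0:ℝ)..1, μ x * phi 1 x * phi j x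

/-- Fourier coefficients of `μ·ψ`, where `ψ` has coefficients `c`. -/
def muMul (μ : ℝ → ℝ) (c : ℕ → ℂ) : ℕ → ℂ := fun j =>
  ∑' l : ℕ, c l * ((∫ x in (0:ℝ)..1, μ x * phi l x * phi j x : ℝ) : ℂ)

/-- A representation of a function `μ ∈ H^m(0,1)`: `D i` is the `i`-th derivative,
with `D (m-1)` absolutely continuous with derivative `D m ∈ L²(0,1)`. -/
structure SobRep (m : ℕ) (μ : ℝ → ℝ) where
  D : ℕ → ℝ → ℝ
  D_zero : ∀ x ∈ Icc (0:ℝ) 1, D 0 x = μ x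
  D_ftc : ∀ i < m, ∀ x ∈ Icc (0:ℝ) 1, D i x = D i 0 + ∫ t in (0:ℝ)..x, D (i+1) t
  D_int : ∀ i ≤ m, IntegrableOn (D i) (Icc (0:ℝ) 1)
  D_L2 : MemLp (D m) 2 (volume.restrict (Ioo (0:ℝ) 1))

/-- Iterated primitives vanishing at `0` : `iprim w 0 = w`, `iprim w (n+1) (t) = ∫₀ᵗ iprim w n`. -/
def iprim (w : ℝ → ℝ) : ℕ → ℝ → ℝ
  | 0 => w
  | n+1 => fun t => ∫ τ in (0:ℝ)..t, iprim w n τ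

/-- The `L²(0,T)` norm. -/
def L2T (T : ℝ) (v : ℝ → ℝ) : ℝ := Real.sqrt (∫ t in (0:ℝ)..T, (v t) ^ 2)

/-- `w` is the `k`-th derivative of a control `u = iprim w k ∈ H^k_0(0,T)`:
`w ∈ L²(0,T)` and all the primitives `iprim w i`, `1 ≤ i ≤ k`, vanish at `T`
(they vanish at `0` by construction), i.e. `u⁽ⁱ⁾(0) = u⁽ⁱ⁾(T) = 0` for `0 ≤ i ≤ k-1`. -/
def MemHk0 (k : ℕ) (T : ℝ) (w : ℝ → ℝ) : Prop :=
  IntegrableOn w (Icc (0:ℝ) T) ∧ MemLp w 2 (volume.restrict (Ioo (0:ℝ) T)) ∧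
    ∀ i, 1 ≤ i → i ≤ k → iprim w i T = 0

/-- The full `H^n(0,T)` norm of `u = iprim w k`, for `n ≤ k`. -/
def uHNorm (k : ℕ) (T : ℝ) (w : ℝ → ℝ) (n : ℕ) : ℝ :=
  Real.sqrt (∑ i ∈ Finset.range (n+1), (L2T T (iprim w (k - i))) ^ 2)

/-- The `H^m_0(0,T)`-norm of `u = iprim w k` for `0 ≤ m ≤ k`, namely `‖u⁽ᵐ⁾‖_{L²}`,
and for `m < 0` the weak norm `‖u‖_{H^m} = |u₁(T)| + ‖u_{|m|}‖_{L²}`. -/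
def ctrlNorm (k : ℕ) (T : ℝ) (w : ℝ → ℝ) (m : ℤ) : ℝ :=
  if 0 ≤ m then L2T T (iprim w (k - m.toNat))
  else |iprim w (k+1) T| + L2T T (iprim w (k + m.natAbs))

/-- The full `H^m(0,T)` norm of `u = iprim w k` for `0 ≤ m ≤ k`, and the weak norm
`|u₁(T)| + ‖u_{|m|}‖_{L²}` for `m < 0`. -/
def mixNorm (k : ℕ) (T : ℝ) (w : ℝ → ℝ) (m : ℤ) : ℝ :=
  if 0 ≤ m then uHNorm k T w m.toNat
  else |iprim w (k+1) T| + L2T T (iprim w (k + m.natAbs))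

/-- Duhamel formula (componentwise on Fourier coefficients) for the weak solution of
`i∂_t ψ = -∂²_x ψ - u(t)μ(x)ψ - f`, `ψ(0) = ψ₀`. -/
def WeakSolF (T : ℝ) (μ : ℝ → ℝ) (u : ℝ → ℝ) (f : ℝ → ℕ → ℂ) (ψ0 : ℕ → ℂ)
    (ψ : ℝ → ℕ → ℂ) : Prop :=
  ψ 0 = ψ0 ∧ ∀ t ∈ Icc (0:ℝ) T, ∀ j : ℕ,
    ψ t j = Complex.exp (-Complex.I * ((lam j : ℝ) : ℂ) * (t : ℂ)) * ψ0 j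
      + Complex.I * ∫ τ in (0:ℝ)..t,
          Complex.exp (-Complex.I * ((lam j : ℝ) : ℂ) * ((t - τ : ℝ) : ℂ))
            * (((u τ : ℝ) : ℂ) * muMul μ (ψ τ) j + f τ j)

/-- Weak solution without source term. -/
def WeakSol (T : ℝ) (μ : ℝ → ℝ) (u : ℝ → ℝ) (ψ0 : ℕ → ℂ) (ψ : ℝ → ℕ → ℂ) : Prop :=
  WeakSolF T μ u (fun _ _ => 0) ψ0 ψ

/-- `Dt` witnesses `ψ ∈ C^k([0,T], H^s_{(0)})`: `Dt n` is the `n`-th time derivative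
(derivatives and continuity hold in the `H^s_{(0)}` norm). -/
def CkH (k : ℕ) (s T : ℝ) (ψ : ℝ → ℕ → ℂ) (Dt : ℕ → ℝ → ℕ → ℂ) : Prop :=
  Dt 0 = ψ ∧
  (∀ n ≤ k, ∀ t ∈ Icc (0:ℝ) T, MemH s (Dt n t)) ∧
  (∀ n < k, ∀ t ∈ Icc (0:ℝ) T,
    Tendsto (fun τ : ℝ =>
        HNorm s (fun j => ((τ - t : ℝ) : ℂ)⁻¹ * (Dt n τ j - Dt n t j) - Dt (n+1) t j))
      (𝓝[Icc (0:ℝ) T \ {t}] t) (𝓝 0)) ∧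
  (∀ n ≤ k, ∀ t ∈ Icc (0:ℝ) T,
    Tendsto (fun τ : ℝ => HNorm s (fun j => Dt n τ j - Dt n t j)) (𝓝[Icc (0:ℝ) T] t) (𝓝 0))

/-- `ψ ∈ C⁰([0,T], H^s_{(0)})`. -/
def C0H (s T : ℝ) (ψ : ℝ → ℕ → ℂ) : Prop :=
  (∀ t ∈ Icc (0:ℝ) T, MemH s (ψ t)) ∧
  (∀ t ∈ Icc (0:ℝ) T,
    Tendsto (fun τ : ℝ => HNorm s (fun j => ψ τ j - ψ t j)) (𝓝[Icc (0:ℝ) T] t) (𝓝 0))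

/-- The `C^k([0,T], H^s_{(0)})` norm. -/
def CkHnorm (k : ℕ) (s T : ℝ) (Dt : ℕ → ℝ → ℕ → ℂ) : ℝ :=
  sSup {r : ℝ | ∃ n ≤ k, ∃ t ∈ Icc (0:ℝ) T, r = HNorm s (Dt n t)}

/-- Remainder of the coefficients of `g` after subtracting the boundary contribution
`(a(-1)^j + b)/j^{2p+3}`, with `a, b` proportional to `g^{(2p+2)}(1)`, `g^{(2p+2)}(0)`. -/
def XRem (p : ℕ) (a b : ℂ) (c : ℕ → ℂ) : ℕ → ℂ :=
  fun j => c j - (a * (-1 : ℂ) ^ j + b) / ((j : ℂ) ^ (2*p+3))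

/-- `c` are the coefficients of a function of `H^{2p+3}(0,1) ∩ H^{2p+1}_{(0)}(0,1)`,
with boundary data `a, b`. -/
def MemX (p : ℕ) (a b : ℂ) (c : ℕ → ℂ) : Prop :=
  MemH (2*(p:ℝ)+1) c ∧ MemH (2*(p:ℝ)+3) (XRem p a b c)

/-- Square of the `H^{2p+3}(0,1)` norm (an equivalent form of it). -/
def H3NormSq (p : ℕ) (a b : ℂ) (c : ℕ → ℂ) : ℝ :=
  (HNorm (2*(p:ℝ)+3) (XRem p a b c)) ^ 2 + ‖a‖ ^ 2 + ‖b‖ ^ 2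

/-- Square of the `H^{2p+3} ∩ H^{2p+1}_{(0)}` norm. -/
def XNormSq (p : ℕ) (a b : ℂ) (c : ℕ → ℂ) : ℝ :=
  H3NormSq p a b c + (HNorm (2*(p:ℝ)+1) c) ^ 2

/-- A representation of `f ∈ H^k_0((0,T), X)` (componentwise on spatial Fourier
coefficients): `F i` is the `i`-th time derivative, and the derivatives up to order
`k-1` vanish at `t = 0` and `t = T`. -/
structure SrcRep (k : ℕ) (T : ℝ) (f : ℝ → ℕ → ℂ) where
  F : ℕ → ℝ → ℕ → ℂ
  F_zero : F 0 = f
  F_ftc : ∀ i < k, ∀ t ∈ Icc (0:ℝ) T, ∀ j, F i t j = ∫ τ in (0:ℝ)..t, F (i+1) τ j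
  F_vanishT : ∀ i < k, ∀ j, F i T j = 0
  F_int : ∀ i ≤ k, ∀ j, IntegrableOn (fun t => F i t j) (Icc (0:ℝ) T)

/-- Square of the `H^k((0,T), H^{2p+3} ∩ H^{2p+1}_{(0)})` norm. -/
def srcNormSq (k p : ℕ) (T : ℝ) (F : ℕ → ℝ → ℕ → ℂ) (A B : ℕ → ℝ → ℂ) : ℝ :=
  ∑ i ∈ Finset.range (k+1), ∫ t in (0:ℝ)..T, XNormSq p (A i t) (B i t) (F i t)

/-- `G(t) = ∫₀ᵗ e^{-iA(t-τ)} f(τ) dτ`, componentwise. -/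
def Gfun (f : ℝ → ℕ → ℂ) (t : ℝ) (j : ℕ) : ℂ :=
  ∫ τ in (0:ℝ)..t, Complex.exp (-Complex.I * ((lam j : ℝ) : ℂ) * ((t - τ : ℝ) : ℂ)) * f τ j

/-- Weight `δ_{j,0} + ω_j^m` of the space `h^{2m}_{ω,r}` (with total weight `1` at `j = 0`). -/
def wgt (ω : ℕ → ℝ) (m : ℤ) (j : ℕ) : ℝ := if j = 0 then 1 else (ω j) ^ (m : ℝ)

/-- Membership in `h^{2m}_{ω,r}(ℕ,ℂ)` (up to the reality constraint on `d₀`). -/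
def Memh (ω : ℕ → ℝ) (m : ℤ) (d : ℕ → ℂ) : Prop :=
  Summable fun j : ℕ => (wgt ω m j * ‖d j‖) ^ 2

/-- The `h^{2m}_ω` norm. -/
def hnorm (ω : ℕ → ℝ) (m : ℤ) (d : ℕ → ℂ) : ℝ :=
  Real.sqrt (∑' j : ℕ, (wgt ω m j * ‖d j‖) ^ 2)

/-- The `h^{2m}_ω` norm restricted to indices `j ≥ N`. -/
def hnormGe (ω : ℕ → ℝ) (N : ℕ) (m : ℤ) (d : ℕ → ℂ) : ℝ :=
  Real.sqrt (∑' j : ℕ, (if N ≤ j then wgt ω m j * ‖d j‖ else 0) ^ 2)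

/-- Membership in `h^{2m}` restricted to indices `j ≥ N`. -/
def MemhGe (ω : ℕ → ℝ) (N : ℕ) (m : ℤ) (d : ℕ → ℂ) : Prop :=
  Summable fun j : ℕ => (if N ≤ j then wgt ω m j * ‖d j‖ else 0) ^ 2

/-- `ω_{j+1} - ω_j → +∞`. -/
def AsymptGap (ω : ℕ → ℝ) : Prop := Tendsto (fun j : ℕ => ω (j+1) - ω j) atTop atTop

/-- Polynomial asymptotic gap: `ω_{j+1} - ω_j ≥ c j^ε` for `j ≥ N₀`. -/
def AsymptGapPoly (ω : ℕ → ℝ) : Prop :=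
  ∃ ε > (0:ℝ), ∃ N₀ : ℕ, ∃ c > (0:ℝ), ∀ j : ℕ, N₀ ≤ j → c * (j : ℝ) ^ ε ≤ ω (j+1) - ω j

/-- Trigonometric moment `∫₀ᵀ u(t) e^{iω_j t} dt`. -/
def expMom (ω : ℕ → ℝ) (T : ℝ) (u : ℝ → ℝ) (j : ℕ) : ℂ :=
  ∫ t in (0:ℝ)..T, ((u t : ℝ) : ℂ) * Complex.exp (Complex.I * ((ω j : ℝ) : ℂ) * (t : ℂ))

/-- Polynomial moment `∫₀ᵀ t^q u(t) dt`. -/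
def polyMom (T : ℝ) (u : ℝ → ℝ) (q : ℕ) : ℝ := ∫ t in (0:ℝ)..T, t ^ q * u t

/-- `ξ̃_j(t) = (1/T) e^{-iω_j t} χ(t)`. -/
def xiF (ωj T : ℝ) (χ : ℝ → ℝ) (t : ℝ) : ℂ :=
  ((1/T : ℝ) : ℂ) * Complex.exp (-Complex.I * ((ωj : ℝ) : ℂ) * (t : ℂ)) * ((χ t : ℝ) : ℂ)

/-- Synthesis operator `P_N d = ∑_{|j| ≥ N} d_j ξ̃_j`, with `d_{-j} := conj d_j`
(so each term contributes `2 Re (d_j ξ̃_j)`). -/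
def Pfun (ω : ℕ → ℝ) (T : ℝ) (χ : ℝ → ℝ) (N : ℕ) (d : ℕ → ℂ) (t : ℝ) : ℝ :=
  ∑' j : ℕ, if N ≤ j then 2 * (d j * xiF (ω j) T χ t).re else 0

/-- A weight function `χ ∈ C_c^∞((0,T),ℝ)` with `∫₀ᵀ χ = 1`. -/
def GoodChi (T : ℝ) (χ : ℝ → ℝ) : Prop :=
  ContDiff ℝ (⊤ : ℕ∞) χ ∧ tsupport χ ⊆ Ioo (0:ℝ) T ∧ (∫ t in (0:ℝ)..T, χ t) = 1

/-- The error operator `Σ = L_N ∘ P_N - Id` on sequences supported in `j ≥ N`. -/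
def SigmaOp (ω : ℕ → ℝ) (T : ℝ) (χ : ℝ → ℝ) (N : ℕ) (d : ℕ → ℂ) : ℕ → ℂ :=
  fun j => if N ≤ j then expMom ω T (Pfun ω T χ N d) j - d j else 0

/-- The Neumann series `M_N = ∑_q (-1)^q P_N ∘ Σ^q`. -/
def MFun (ω : ℕ → ℝ) (T : ℝ) (χ : ℝ → ℝ) (N : ℕ) (d : ℕ → ℂ) (t : ℝ) : ℝ :=
  ∑' q : ℕ, (-1 : ℝ) ^ q * Pfun ω T χ N ((SigmaOp ω T χ N)^[q] d) t

end
noncomputable section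

open MeasureTheory Real Set Filter Topology

private lemma tri_swap (w K : ℝ → ℝ) (hw : IntegrableOn w (Icc (0:ℝ) 1)) (hK : Continuous K) :
    ∫ x in (0:ℝ)..1, (∫ t in (0:ℝ)..x, w t) * K x
      = ∫ t in (0:ℝ)..1, w t * ∫ x in t..(1:ℝ), K x := by
  have hw' : IntegrableOn w (Ioc (0:ℝ) 1) := hw.mono_set Ioc_subset_Icc_self
  have hKi : IntegrableOn K (Ioc (0:ℝ) 1) :=
    (hK.integrableOn_Icc (a := 0) (b := 1)).mono_set Ioc_subset_Icc_self
  -- the product integrand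
  set F : ℝ × ℝ → ℝ := fun q => {q : ℝ × ℝ | q.2 ≤ q.1}.indicator (fun q => K q.1 * w q.2) q with hF
  have hmeas : MeasurableSet {q : ℝ × ℝ | q.2 ≤ q.1} :=
    (isClosed_le continuous_snd continuous_fst).measurableSet
  have hFint : Integrable F (((volume : Measure ℝ).restrict (Ioc (0:ℝ) 1)).prod
      ((volume : Measure ℝ).restrict (Ioc (0:ℝ) 1))) := by
    refine (Integrable.indicator ?_ hmeas)
    exact Integrable.mul_prod hKi hw'
  have swap := MeasureTheory.integral_integral_swap (f := fun x t => F (x, t)) hFint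
  -- LHS equals the first iterated integral
  have hL : (∫ x in (0:ℝ)..1, (∫ t in (0:ℝ)..x, w t) * K x)
      = ∫ x in Ioc (0:ℝ) 1, ∫ t in Ioc (0:ℝ) 1, F (x, t) := by
    rw [intervalIntegral.integral_of_le (by norm_num)]
    refine setIntegral_congr_fun measurableSet_Ioc (fun x hx => ?_)
    have hx0 : (0:ℝ) ≤ x := le_of_lt hx.1
    have : (∫ t in Ioc (0:ℝ) 1, F (x, t)) = ∫ t in Ioc (0:ℝ) 1 ∩ Iic x, K x * w t := by
      have : (fun t => F (x, t)) = (Iic x).indicator (fun t => K x * w t) := by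
        funext t
        by_cases h : t ≤ x <;> simp [F, Set.indicator, h]
      rw [this, setIntegral_indicator measurableSet_Iic]
    rw [this]
    have hset : Ioc (0:ℝ) 1 ∩ Iic x = Ioc 0 x := by
      rw [Set.Ioc_inter_Iic, min_eq_right hx.2]
    rw [hset, intervalIntegral.integral_of_le hx0, mul_comm,
      ← MeasureTheory.integral_const_mul]
  have hR : (∫ t in Ioc (0:ℝ) 1, ∫ x in Ioc (0:ℝ) 1, F (x, t))
      = ∫ t in (0:ℝ)..1, w t * ∫ x in t..(1:ℝ), K x := by
    rw [intervalIntegral.integral_of_le (by norm_num)]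
    refine setIntegral_congr_fun measurableSet_Ioc (fun t ht => ?_)
    have : (∫ x in Ioc (0:ℝ) 1, F (x, t)) = ∫ x in Ioc (0:ℝ) 1 ∩ Ici t, K x * w t := by
      have : (fun x => F (x, t)) = (Ici t).indicator (fun x => K x * w t) := by
        funext x
        by_cases h : t ≤ x <;> simp [F, Set.indicator, h]
      rw [this, setIntegral_indicator measurableSet_Ici]
    rw [this]
    have hset : Ioc (0:ℝ) 1 ∩ Ici t = Icc t 1 := by
      ext y; constructor
      · rintro ⟨⟨h1, h2⟩, h3⟩; exact ⟨h3, h2⟩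
      · rintro ⟨h1, h2⟩; exact ⟨⟨lt_of_lt_of_le ht.1 h1, h2⟩, h1⟩
    rw [hset, MeasureTheory.integral_Icc_eq_integral_Ioc,
      ← intervalIntegral.integral_of_le ht.2]
    rw [mul_comm (w t), ← intervalIntegral.integral_mul_const]
  rw [hL, swap, hR]


private lemma intInt_of_Icc {f : ℝ → ℝ} (hf : IntegrableOn f (Icc (0:ℝ) 1)) :
    IntervalIntegrable f volume 0 1 := by
  have : IntegrableOn f (uIcc (0:ℝ) 1) := by
    rwa [uIcc_of_le (by norm_num : (0:ℝ) ≤ 1)]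
  exact this.intervalIntegrable

private lemma step_lemma (f w K : ℝ → ℝ)
    (hftc : ∀ x ∈ Icc (0:ℝ) 1, f x = f 0 + ∫ t in (0:ℝ)..x, w t)
    (hw : IntegrableOn w (Icc (0:ℝ) 1)) (hK : Continuous K) :
    ∫ x in (0:ℝ)..1, f x * K x
      = f 0 * (∫ x in (0:ℝ)..1, K x) + ∫ t in (0:ℝ)..1, w t * ∫ x in t..(1:ℝ), K x := by
  have h01 : (0:ℝ) ≤ 1 := by norm_num
  have hcong : (∫ x in (0:ℝ)..1, f x * K x)
      = ∫ x in (0:ℝ)..1, (f 0 + ∫ t in (0:ℝ)..x, w t) * K x := by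
    refine intervalIntegral.integral_congr (fun x hx => ?_)
    rw [uIcc_of_le h01] at hx
    rw [hftc x hx]
  rw [hcong]
  have hwii : IntervalIntegrable w volume 0 1 := intInt_of_Icc hw
  have hprim : ContinuousOn (fun x => ∫ t in (0:ℝ)..x, w t) (uIcc (0:ℝ) 1) := by
    refine intervalIntegral.continuousOn_primitive_interval ?_
    rwa [uIcc_of_le h01]
  have hii1 : IntervalIntegrable (fun x => f 0 * K x) volume 0 1 :=
    (continuous_const.mul hK).intervalIntegrable 0 1
  have hii2 : IntervalIntegrable (fun x => (∫ t in (0:ℝ)..x, w t) * K x) volume 0 1 :=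
    (hprim.mul hK.continuousOn).intervalIntegrable
  rw [show (fun x => (f 0 + ∫ t in (0:ℝ)..x, w t) * K x)
      = fun x => f 0 * K x + (∫ t in (0:ℝ)..x, w t) * K x by funext x; ring]
  rw [intervalIntegral.integral_add hii1 hii2, intervalIntegral.integral_const_mul,
    tri_swap w K hw hK]

private lemma kpi_pos {k : ℕ} (hk : 1 ≤ k) : (0:ℝ) < k * π :=
  mul_pos (by exact_mod_cast hk) Real.pi_pos

private lemma int_cos_t1 {k : ℕ} (hk : 1 ≤ k) (t : ℝ) :
    ∫ x in t..(1:ℝ), Real.cos ((k:ℝ) * π * x) = -Real.sin ((k:ℝ) * π * t) / ((k:ℝ) * π) := by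
  have hc : ((k:ℝ) * π) ≠ 0 := ne_of_gt (kpi_pos hk)
  rw [intervalIntegral.integral_comp_mul_left (fun x => Real.cos x) hc, integral_cos]
  rw [mul_one, Real.sin_nat_mul_pi]
  simp [smul_eq_mul]
  ring

private lemma int_sin_t1 {k : ℕ} (hk : 1 ≤ k) (t : ℝ) :
    ∫ x in t..(1:ℝ), Real.sin ((k:ℝ) * π * x)
      = (Real.cos ((k:ℝ) * π * t) - (-1:ℝ)^k) / ((k:ℝ) * π) := by
  have hc : ((k:ℝ) * π) ≠ 0 := ne_of_gt (kpi_pos hk)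
  rw [intervalIntegral.integral_comp_mul_left (fun x => Real.sin x) hc, integral_sin]
  have : Real.cos ((k:ℝ) * π * 1) = (-1:ℝ)^k := by
    rw [mul_one]
    simpa using Real.cos_nat_mul_pi_sub 0 k
  rw [this, smul_eq_mul]
  ring

private lemma Arec (f w : ℝ → ℝ)
    (hftc : ∀ x ∈ Icc (0:ℝ) 1, f x = f 0 + ∫ t in (0:ℝ)..x, w t)
    (hw : IntegrableOn w (Icc (0:ℝ) 1)) {k : ℕ} (hk : 1 ≤ k) :
    ∫ x in (0:ℝ)..1, f x * Real.cos ((k:ℝ) * π * x)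
      = -(((k:ℝ) * π)⁻¹) * ∫ t in (0:ℝ)..1, w t * Real.sin ((k:ℝ) * π * t) := by
  have hc : ((k:ℝ) * π) ≠ 0 := ne_of_gt (kpi_pos hk)
  rw [step_lemma f w (fun x => Real.cos ((k:ℝ) * π * x)) hftc hw (by fun_prop)]
  have h1 : (∫ x in (0:ℝ)..1, Real.cos ((k:ℝ) * π * x)) = 0 := by
    have := int_cos_t1 hk 0
    simpa using this
  rw [h1, mul_zero, zero_add]
  have : (fun t => w t * ∫ x in t..(1:ℝ), Real.cos ((k:ℝ) * π * x))
      = fun t => -(((k:ℝ) * π)⁻¹) * (w t * Real.sin ((k:ℝ) * π * t)) := by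
    funext t
    rw [int_cos_t1 hk t, div_eq_mul_inv]
    ring
  rw [this, intervalIntegral.integral_const_mul]

private lemma Brec (f w : ℝ → ℝ)
    (hftc : ∀ x ∈ Icc (0:ℝ) 1, f x = f 0 + ∫ t in (0:ℝ)..x, w t)
    (hw : IntegrableOn w (Icc (0:ℝ) 1)) {k : ℕ} (hk : 1 ≤ k) :
    ∫ x in (0:ℝ)..1, f x * Real.sin ((k:ℝ) * π * x)
      = ((k:ℝ) * π)⁻¹ * (f 0 - (-1:ℝ)^k * f 1)
        + ((k:ℝ) * π)⁻¹ * ∫ t in (0:ℝ)..1, w t * Real.cos ((k:ℝ) * π * t) := by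
  have hc : ((k:ℝ) * π) ≠ 0 := ne_of_gt (kpi_pos hk)
  rw [step_lemma f w (fun x => Real.sin ((k:ℝ) * π * x)) hftc hw (by fun_prop)]
  have h1 : (∫ x in (0:ℝ)..1, Real.sin ((k:ℝ) * π * x)) = (1 - (-1:ℝ)^k) / ((k:ℝ) * π) := by
    have := int_sin_t1 hk 0
    simpa using this
  have hsplit : (fun t => w t * ∫ x in t..(1:ℝ), Real.sin ((k:ℝ) * π * x))
      = fun t => ((k:ℝ) * π)⁻¹ * (w t * Real.cos ((k:ℝ) * π * t))
        + (-(((k:ℝ) * π)⁻¹ * (-1:ℝ)^k)) * w t := by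
    funext t
    rw [int_sin_t1 hk t, div_eq_mul_inv]
    ring
  have hwii : IntervalIntegrable w volume 0 1 := intInt_of_Icc hw
  have hwc : IntervalIntegrable (fun t => w t * Real.cos ((k:ℝ) * π * t)) volume 0 1 :=
    hwii.mul_continuousOn (Continuous.continuousOn (by fun_prop))
  have hint_w : (∫ t in (0:ℝ)..1, w t) = f 1 - f 0 := by
    have := hftc 1 (by norm_num)
    rw [this]; ring
  rw [h1, hsplit, intervalIntegral.integral_add
      (hwc.const_mul _) (hwii.const_mul _),
    intervalIntegral.integral_const_mul, intervalIntegral.integral_const_mul, hint_w]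
  field_simp
  ring

private lemma RL_sin (D : ℝ → ℝ) (hD : IntegrableOn D (Icc (0:ℝ) 1)) :
    Tendsto (fun k : ℕ => ∫ t in (0:ℝ)..1, D t * Real.sin ((k:ℝ) * π * t)) atTop (𝓝 0) := by
  set h : ℝ → ℂ := (Ioc (0:ℝ) 1).indicator (fun t => (D t : ℂ)) with hh
  have hDi : IntegrableOn (fun t => (D t : ℂ)) (Ioc (0:ℝ) 1) :=
    (hD.mono_set Ioc_subset_Icc_self).ofReal
  have hint : Integrable h := by
    rw [hh, ← integrable_indicator_iff measurableSet_Ioc] at *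
    exact hDi
  have key : ∀ k : ℕ, (∫ t in (0:ℝ)..1, D t * Real.sin ((k:ℝ) * π * t))
      = -(FourierTransform.fourier h ((k:ℝ)/2)).im := by
    intro k
    rw [Real.fourier_real_eq_integral_exp_smul]
    have hInt2 : Integrable (fun v : ℝ => Complex.exp (↑(-2 * π * v * ((k:ℝ)/2)) * Complex.I) • h v) := by
      refine Integrable.bdd_mul (c := 1) hint ?_ (Eventually.of_forall fun x => ?_)
      · exact (Complex.continuous_exp.comp
          ((Complex.continuous_ofReal.comp (by fun_prop)).mul continuous_const)).aestronglyMeasurable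
      · rw [Complex.norm_exp_ofReal_mul_I]
    rw [← RCLike.im_eq_complex_im, ← integral_im hInt2]
    have him : ∀ v : ℝ, RCLike.im (Complex.exp (↑(-2 * π * v * ((k:ℝ)/2)) * Complex.I) • h v)
        = (Ioc (0:ℝ) 1).indicator (fun v => -(D v * Real.sin ((k:ℝ) * π * v))) v := by
      intro v
      rw [RCLike.im_eq_complex_im, smul_eq_mul]
      by_cases hv : v ∈ Ioc (0:ℝ) 1
      · rw [hh, Set.indicator_of_mem hv, Set.indicator_of_mem hv]
        have harg : -2 * π * v * ((k:ℝ)/2) = -((k:ℝ) * π * v) := by ring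
        simp only [Complex.mul_im, Complex.exp_ofReal_mul_I_re, Complex.exp_ofReal_mul_I_im,
          Complex.ofReal_re, Complex.ofReal_im, harg, Real.sin_neg, Real.cos_neg]
        ring
      · rw [hh, Set.indicator_of_notMem hv, Set.indicator_of_notMem hv, mul_zero]
        rfl
    rw [show (fun v : ℝ => RCLike.im (Complex.exp (↑(-2 * π * v * ((k:ℝ)/2)) * Complex.I) • h v))
        = (Ioc (0:ℝ) 1).indicator (fun v => -(D v * Real.sin ((k:ℝ) * π * v)))
        from funext him]
    rw [MeasureTheory.integral_indicator measurableSet_Ioc, MeasureTheory.integral_neg,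
      intervalIntegral.integral_of_le (by norm_num : (0:ℝ) ≤ 1)]
    ring
  have T1 : Tendsto (fun k : ℕ => ((k:ℝ)/2)) atTop atTop :=
    (tendsto_natCast_atTop_atTop (R := ℝ)).atTop_div_const (by norm_num)
  have T2 : Tendsto (fun k : ℕ => ((k:ℝ)/2)) atTop (cocompact ℝ) := by
    rw [cocompact_eq_atBot_atTop]
    exact T1.mono_right le_sup_right
  have T3 : Tendsto (fun k : ℕ => FourierTransform.fourier h ((k:ℝ)/2)) atTop (𝓝 0) :=
    (Real.zero_at_infty_fourier h).comp T2
  have T4 : Tendsto (fun k : ℕ => -(FourierTransform.fourier h ((k:ℝ)/2)).im) atTop (𝓝 0) := by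
    have := ((Complex.continuous_im.tendsto 0).comp T3).neg
    simpa using this
  exact T4.congr (fun k => (key k).symm)


private lemma hlim (q : ℕ) :
    Tendsto (fun j : ℕ => (j:ℝ)^(q+1) * ((((j:ℝ)-1)⁻¹)^q - (((j:ℝ)+1)⁻¹)^q))
      atTop (𝓝 (2*q)) := by
  set ψ : ℝ → ℝ := fun s => ((1-s)^q)⁻¹ - ((1+s)^q)⁻¹ with hψ
  have hd : HasDerivAt ψ (2*q) 0 := by
    have hA : HasDerivAt (fun s : ℝ => ((1-s)^q)⁻¹)
        (-((q:ℝ) * (1-(0:ℝ))^(q-1) * (-1)) / ((1-(0:ℝ))^q)^2) 0 := by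
      exact (((hasDerivAt_id (0:ℝ)).const_sub 1).pow q).inv (by norm_num)
    have hB : HasDerivAt (fun s : ℝ => ((1+s)^q)⁻¹)
        (-((q:ℝ) * (1+(0:ℝ))^(q-1) * 1) / ((1+(0:ℝ))^q)^2) 0 := by
      exact (((hasDerivAt_id (0:ℝ)).const_add 1).pow q).inv (by norm_num)
    have := hA.sub hB
    exact HasDerivAt.congr_deriv this (by norm_num; ring)
  rw [hasDerivAt_iff_tendsto_slope] at hd
  have T0 : Tendsto (fun j : ℕ => ((j:ℝ))⁻¹) atTop (𝓝[≠] (0:ℝ)) := by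
    rw [tendsto_nhdsWithin_iff]
    constructor
    · exact tendsto_inv_atTop_zero.comp tendsto_natCast_atTop_atTop
    · filter_upwards [eventually_ge_atTop 1] with j hj
      have : (0:ℝ) < (j:ℝ) := by exact_mod_cast Nat.lt_of_lt_of_le Nat.zero_lt_one hj
      simp [ne_of_gt (inv_pos.mpr this)]
  have T := hd.comp T0
  refine T.congr' ?_
  filter_upwards [eventually_ge_atTop 2] with j hj
  set x : ℝ := (j:ℝ) with hx
  have hx2 : (2:ℝ) ≤ x := by rw [hx]; exact_mod_cast hj
  have hx0 : x ≠ 0 := by linarith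
  have hxm : x - 1 ≠ 0 := by linarith
  have hxp : x + 1 ≠ 0 := by linarith
  have hψ0 : ψ 0 = 0 := by simp [hψ]
  have h1 : (1 - x⁻¹) = (x-1)/x := by field_simp
  have h2 : (1 + x⁻¹) = (x+1)/x := by field_simp
  show slope ψ 0 x⁻¹ = x^(q+1) * (((x-1)⁻¹)^q - ((x+1)⁻¹)^q)
  rw [slope_def_field, hψ0, sub_zero, sub_zero, hψ]
  simp only [h1, h2, div_pow]
  rw [inv_div, inv_div, inv_pow, inv_pow]
  field_simp
  ring

private lemma A0_formula (p : ℕ) (D : ℕ → ℝ → ℝ)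
    (hftc : ∀ i < 2*p+3, ∀ x ∈ Icc (0:ℝ) 1, D i x = D i 0 + ∫ t in (0:ℝ)..x, D (i+1) t)
    (hint : ∀ i ≤ 2*p+3, IntegrableOn (D i) (Icc (0:ℝ) 1))
    (hbc : ∀ n < p, D (2*n+1) 0 = 0 ∧ D (2*n+1) 1 = 0)
    {k : ℕ} (hk : 1 ≤ k) :
    ∫ x in (0:ℝ)..1, D 0 x * Real.cos ((k:ℝ)*π*x)
      = (-1:ℝ)^(p+1) * ( (((k:ℝ)*π)⁻¹)^(2*p+2) * (D (2*p+1) 0 - (-1:ℝ)^k * D (2*p+1) 1)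
        - (((k:ℝ)*π)⁻¹)^(2*p+3) * ∫ t in (0:ℝ)..1, D (2*p+3) t * Real.sin ((k:ℝ)*π*t) ) := by
  set r : ℝ := (((k:ℝ)*π)⁻¹) with hr
  set A : ℕ → ℝ := fun i => ∫ x in (0:ℝ)..1, D i x * Real.cos ((k:ℝ)*π*x) with hA
  set B : ℕ → ℝ := fun i => ∫ x in (0:ℝ)..1, D i x * Real.sin ((k:ℝ)*π*x) with hB
  have stepA : ∀ i, i < 2*p+3 → A i = -r * B (i+1) := fun i hi =>
    Arec (D i) (D (i+1)) (hftc i hi) (hint (i+1) hi) hk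
  have stepB : ∀ i, i < 2*p+3 →
      B i = r * (D i 0 - (-1:ℝ)^k * D i 1) + r * A (i+1) := fun i hi =>
    Brec (D i) (D (i+1)) (hftc i hi) (hint (i+1) hi) hk
  have claim : ∀ n, n ≤ p → A 0 = (-(r^2))^n * A (2*n) := by
    intro n hn
    induction n with
    | zero => simp
    | succ m ih =>
      have hm : m ≤ p := Nat.le_of_succ_le hn
      have hmp : m < p := hn
      have h1 : (2*m) < 2*p+3 := by omega
      have h2 : (2*m+1) < 2*p+3 := by omega
      have e1 : A (2*m) = -(r^2) * A (2*m+2) := by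
        rw [stepA _ h1, stepB _ h2, (hbc m hmp).1, (hbc m hmp).2]
        ring_nf
      have := ih hm
      rw [this, e1]
      have : 2*(m+1) = 2*m+2 := by ring
      rw [this]
      ring
  have final := claim p le_rfl
  have h1 : (2*p) < 2*p+3 := by omega
  have h2 : (2*p+1) < 2*p+3 := by omega
  have h3 : (2*p+2) < 2*p+3 := by omega
  show A 0 = _
  rw [final, stepA _ h1, stepB _ h2, stepA _ h3]
  have hBv : B (2*p+3) = ∫ t in (0:ℝ)..1, D (2*p+3) t * Real.sin ((k:ℝ)*π*t) := rfl
  have h23 : (2*p+2)+1 = 2*p+3 := by omega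
  rw [show (2*p+1)+1 = 2*p+2 from by omega, show (2*p)+1 = 2*p+1 from by omega, h23, hBv]
  rw [neg_pow (r^2) p]
  ring

private lemma trig_prod (a t : ℝ) :
    Real.cos ((a-1)*π*t) - Real.cos ((a+1)*π*t)
      = 2 * Real.sin (a*π*t) * Real.sin (π*t) := by
  rw [Real.cos_sub_cos]
  have e1 : ((a-1)*π*t + (a+1)*π*t)/2 = a*π*t := by ring
  have e2 : ((a-1)*π*t - (a+1)*π*t)/2 = -(π*t) := by ring
  rw [e1, e2, Real.sin_neg]
  ring

private lemma muCoef_eq (μ : ℝ → ℝ) (D0 : ℝ → ℝ)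
    (hD0 : ∀ x ∈ Icc (0:ℝ) 1, D0 x = μ x)
    (hint : IntegrableOn D0 (Icc (0:ℝ) 1)) {j : ℕ} (hj : 2 ≤ j) :
    muCoef μ j = (∫ x in (0:ℝ)..1, D0 x * Real.cos ((((j-1:ℕ)):ℝ)*π*x))
      - ∫ x in (0:ℝ)..1, D0 x * Real.cos ((((j+1:ℕ)):ℝ)*π*x) := by
  have hcast1 : (((j-1:ℕ)):ℝ) = (j:ℝ) - 1 := by
    have h1 : 1 ≤ j := by omega
    push_cast [h1]
    ring
  have hcast2 : (((j+1:ℕ)):ℝ) = (j:ℝ) + 1 := by push_cast; ring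
  have hkey : ∀ x ∈ Icc (0:ℝ) 1, μ x * phi 1 x * phi j x
      = D0 x * Real.cos ((((j-1:ℕ)):ℝ)*π*x) - D0 x * Real.cos ((((j+1:ℕ)):ℝ)*π*x) := by
    intro x hx
    rw [← hD0 x hx, hcast1, hcast2, ← mul_sub, trig_prod ((j:ℝ)) x]
    simp only [phi, Nat.cast_one, one_mul]
    have h2 : Real.sqrt 2 * Real.sqrt 2 = 2 := Real.mul_self_sqrt (by norm_num)
    calc D0 x * (Real.sqrt 2 * Real.sin (π * x)) * (Real.sqrt 2 * Real.sin ((j:ℝ) * π * x))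
        = (Real.sqrt 2 * Real.sqrt 2) * (D0 x * Real.sin (π * x) * Real.sin ((j:ℝ) * π * x)) := by
          ring
      _ = D0 x * (2 * Real.sin ((j:ℝ)*π*x) * Real.sin (π*x)) := by
          rw [h2]; ring
  have hcong : muCoef μ j = ∫ x in (0:ℝ)..1,
      (D0 x * Real.cos ((((j-1:ℕ)):ℝ)*π*x) - D0 x * Real.cos ((((j+1:ℕ)):ℝ)*π*x)) := by
    refine intervalIntegral.integral_congr (fun x hx => ?_)
    rw [uIcc_of_le (by norm_num : (0:ℝ) ≤ 1)] at hx
    exact hkey x hx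
  rw [hcong, intervalIntegral.integral_sub
    ((intInt_of_Icc hint).mul_continuousOn (Continuous.continuousOn (by fun_prop)))
    ((intInt_of_Icc hint).mul_continuousOn (Continuous.continuousOn (by fun_prop)))]

/-- asymptotics of `⟨μφ₁,φ_j⟩` and the equivalent form of the
nondegeneracy assumption.  For `μ ∈ H^{2p+3}((0,1),ℝ)` with
`μ^{(2n+1)}(0) = μ^{(2n+1)}(1) = 0` for `n < p`:
`⟨μφ₁,φ_j⟩ = ((-1)^p 2(2p+2) / (π^{2p+2} j^{2p+3})) ((-1)^{j+1} μ^{(2p+1)}(1) - μ^{(2p+1)}(0))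
+ o(1/j^{2p+3})`, and if `J` contains infinitely many even and infinitely many odd
integers, the lower bound `|⟨μφ₁,φ_j⟩| ≥ c/j^{2p+3}` on `J` is equivalent to
`μ^{(2p+1)}(0) + μ^{(2p+1)}(1) ≠ 0`, `μ^{(2p+1)}(0) - μ^{(2p+1)}(1) ≠ 0` and
`⟨μφ₁,φ_j⟩ ≠ 0` for all `j ∈ J`. -/
theorem muCoef_asymptotics_and_equivalence (p : ℕ) (μ : ℝ → ℝ)
    (Rμ : SobRep (2*p+3) μ)
    (hbc : ∀ n < p, Rμ.D (2*n+1) 0 = 0 ∧ Rμ.D (2*n+1) 1 = 0) :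
    Tendsto (fun j : ℕ =>
        (j : ℝ) ^ (2*p+3) * muCoef μ j
          - ((-1 : ℝ) ^ p * (2 * (2*(p:ℝ)+2)) / π ^ (2*p+2))
              * ((-1 : ℝ) ^ (j+1) * Rμ.D (2*p+1) 1 - Rμ.D (2*p+1) 0))
      atTop (𝓝 0) ∧
    ∀ J : Set ℕ, (∀ j ∈ J, 1 ≤ j) → {j ∈ J | Even j}.Infinite → {j ∈ J | Odd j}.Infinite →
      ((∃ c > (0:ℝ), ∀ j ∈ J, c / (j : ℝ) ^ (2*p+3) ≤ |muCoef μ j|) ↔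
        (Rμ.D (2*p+1) 0 + Rμ.D (2*p+1) 1 ≠ 0 ∧
         Rμ.D (2*p+1) 0 - Rμ.D (2*p+1) 1 ≠ 0 ∧
         ∀ j ∈ J, muCoef μ j ≠ 0)) := by
  classical
  have hπ : (0:ℝ) < π := Real.pi_pos
  set c0 : ℝ := Rμ.D (2*p+1) 0 with hc0
  set c1 : ℝ := Rμ.D (2*p+1) 1 with hc1
  set Cp : ℝ := (-1 : ℝ) ^ p * (2 * (2*(p:ℝ)+2)) / π ^ (2*p+2) with hCp
  set g : ℕ → ℝ := fun k => ∫ t in (0:ℝ)..1, Rμ.D (2*p+3) t * Real.sin ((k:ℝ)*π*t) with hgdef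
  have hg : Tendsto g atTop (𝓝 0) := RL_sin _ (Rμ.D_int (2*p+3) le_rfl)
  set hfun : ℕ → ℝ := fun j => (j:ℝ)^(2*p+3) * ((((j:ℝ)-1)⁻¹)^(2*p+2) - (((j:ℝ)+1)⁻¹)^(2*p+2))
      - 2*((2*p+2 : ℕ):ℝ) with hhfun
  have hfun0 : Tendsto hfun atTop (𝓝 0) := by
    have h := hlim (2*p+2)
    rw [show 2*p+2+1 = 2*p+3 by omega] at h
    have h2 := h.sub_const (2*((2*p+2:ℕ):ℝ))
    simpa [hhfun] using h2
  have key : ∀ j : ℕ, 2 ≤ j →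
      (j:ℝ)^(2*p+3) * muCoef μ j - Cp * ((-1:ℝ)^(j+1) * c1 - c0)
        = ((-1:ℝ)^(p+1) * (π⁻¹)^(2*p+2) * (c0 - (-1:ℝ)^(j+1) * c1)) * hfun j
          + ( -((-1:ℝ)^(p+1)) * (((j:ℝ)^(2*p+3) * (((j:ℝ)-1)⁻¹)^(2*p+3) * (π⁻¹)^(2*p+3) * g (j-1))
              - ((j:ℝ)^(2*p+3) * (((j:ℝ)+1)⁻¹)^(2*p+3) * (π⁻¹)^(2*p+3) * g (j+1))) ) := by
    intro j hj
    have h1j : 1 ≤ j - 1 := by omega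
    have h1j' : 1 ≤ j + 1 := by omega
    have hcast1 : (((j-1:ℕ)):ℝ) = (j:ℝ) - 1 := by
      have h1 : 1 ≤ j := by omega
      push_cast [h1]; ring
    have hcast2 : (((j+1:ℕ)):ℝ) = (j:ℝ) + 1 := by push_cast; ring
    have hε : ((-1:ℝ))^(j-1) = (-1:ℝ)^(j+1) := by
      have h : j+1 = (j-1)+2 := by omega
      rw [h, pow_add]; norm_num
    have hmu := muCoef_eq μ (Rμ.D 0) Rμ.D_zero (Rμ.D_int 0 (by omega)) hj
    have hF1 := A0_formula p Rμ.D Rμ.D_ftc Rμ.D_int hbc h1j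
    have hF2 := A0_formula p Rμ.D Rμ.D_ftc Rμ.D_int hbc h1j'
    have hg1 : (∫ t in (0:ℝ)..1, Rμ.D (2*p+3) t * Real.sin ((((j-1:ℕ)):ℝ)*π*t)) = g (j-1) := rfl
    have hg2 : (∫ t in (0:ℝ)..1, Rμ.D (2*p+3) t * Real.sin ((((j+1:ℕ)):ℝ)*π*t)) = g (j+1) := rfl
    rw [hmu, hF1, hF2, hε, hg1, hg2]
    generalize g (j-1) = G1
    generalize g (j+1) = G2
    rw [hcast1, hcast2]
    simp only [hhfun, hCp, hc0, hc1, div_eq_mul_inv, mul_inv, ← inv_pow]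
    push_cast
    ring
  have hT : Tendsto (fun j : ℕ =>
      (j : ℝ) ^ (2*p+3) * muCoef μ j - Cp * ((-1 : ℝ) ^ (j+1) * c1 - c0)) atTop (𝓝 0) := by
    set Cq : ℝ := (π⁻¹)^(2*p+2) * (|c0| + |c1|) with hCq
    set C2 : ℝ := 2^(2*p+3) * (π⁻¹)^(2*p+3) with hC2
    have habs1 : ∀ j : ℕ, |(-1:ℝ)^j| = 1 := by
      intro j; rw [abs_pow, abs_neg, abs_one, one_pow]
    refine squeeze_zero_norm'
      (a := fun j => Cq * |hfun j| + (C2 * |g (j-1)| + C2 * |g (j+1)|)) ?_ ?_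
    · filter_upwards [eventually_ge_atTop 2] with j hj
      have ha2 : (2:ℝ) ≤ (j:ℝ) := by exact_mod_cast hj
      set a : ℝ := (j:ℝ) with hadef
      have ham : (0:ℝ) < a - 1 := by linarith
      have hap : (0:ℝ) < a + 1 := by linarith
      rw [Real.norm_eq_abs, key j hj]
      refine (abs_add_le _ _).trans (add_le_add ?_ ?_)
      · rw [abs_mul]
        refine mul_le_mul_of_nonneg_right ?_ (abs_nonneg _)
        calc |(-1:ℝ)^(p+1) * (π⁻¹)^(2*p+2) * (c0 - (-1:ℝ)^(j+1) * c1)|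
            = |(-1:ℝ)^(p+1)| * |(π⁻¹)^(2*p+2)| * |c0 - (-1:ℝ)^(j+1) * c1| := by
              rw [abs_mul, abs_mul]
          _ ≤ 1 * (π⁻¹)^(2*p+2) * (|c0| + |c1|) := by
              refine mul_le_mul ?_ ?_ (abs_nonneg _) (by positivity)
              · rw [habs1 (p+1), abs_of_nonneg (by positivity : (0:ℝ) ≤ (π⁻¹)^(2*p+2))]
              · refine (abs_sub _ _).trans ?_
                rw [abs_mul, habs1 (j+1), one_mul]
          _ = Cq := by rw [hCq]; ring
      · have hb1 : |a^(2*p+3) * ((a-1)⁻¹)^(2*p+3) * (π⁻¹)^(2*p+3) * g (j-1)|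
            ≤ C2 * |g (j-1)| := by
          have hfac : a^(2*p+3) * ((a-1)⁻¹)^(2*p+3) ≤ 2^(2*p+3) := by
            rw [← mul_pow]
            refine pow_le_pow_left₀ (by positivity) ?_ _
            rw [← div_eq_mul_inv, div_le_iff₀ ham]
            linarith
          calc |a^(2*p+3) * ((a-1)⁻¹)^(2*p+3) * (π⁻¹)^(2*p+3) * g (j-1)|
              = (a^(2*p+3) * ((a-1)⁻¹)^(2*p+3)) * ((π⁻¹)^(2*p+3) * |g (j-1)|) := by
                rw [abs_mul, abs_mul, abs_mul,
                  abs_of_nonneg (by positivity : (0:ℝ) ≤ a^(2*p+3)),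
                  abs_of_nonneg (by positivity : (0:ℝ) ≤ ((a-1)⁻¹)^(2*p+3)),
                  abs_of_nonneg (by positivity : (0:ℝ) ≤ (π⁻¹)^(2*p+3))]
                ring
            _ ≤ 2^(2*p+3) * ((π⁻¹)^(2*p+3) * |g (j-1)|) :=
                mul_le_mul_of_nonneg_right hfac (by positivity)
            _ = C2 * |g (j-1)| := by rw [hC2]; ring
        have hb2 : |a^(2*p+3) * ((a+1)⁻¹)^(2*p+3) * (π⁻¹)^(2*p+3) * g (j+1)|
            ≤ C2 * |g (j+1)| := by
          have hfac : a^(2*p+3) * ((a+1)⁻¹)^(2*p+3) ≤ 2^(2*p+3) := by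
            rw [← mul_pow]
            refine pow_le_pow_left₀ (by positivity) ?_ _
            rw [← div_eq_mul_inv, div_le_iff₀ hap]
            linarith
          calc |a^(2*p+3) * ((a+1)⁻¹)^(2*p+3) * (π⁻¹)^(2*p+3) * g (j+1)|
              = (a^(2*p+3) * ((a+1)⁻¹)^(2*p+3)) * ((π⁻¹)^(2*p+3) * |g (j+1)|) := by
                rw [abs_mul, abs_mul, abs_mul,
                  abs_of_nonneg (by positivity : (0:ℝ) ≤ a^(2*p+3)),
                  abs_of_nonneg (by positivity : (0:ℝ) ≤ ((a+1)⁻¹)^(2*p+3)),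
                  abs_of_nonneg (by positivity : (0:ℝ) ≤ (π⁻¹)^(2*p+3))]
                ring
            _ ≤ 2^(2*p+3) * ((π⁻¹)^(2*p+3) * |g (j+1)|) :=
                mul_le_mul_of_nonneg_right hfac (by positivity)
            _ = C2 * |g (j+1)| := by rw [hC2]; ring
        calc |(-((-1:ℝ)^(p+1))) * ((a^(2*p+3) * ((a-1)⁻¹)^(2*p+3) * (π⁻¹)^(2*p+3) * g (j-1))
                - (a^(2*p+3) * ((a+1)⁻¹)^(2*p+3) * (π⁻¹)^(2*p+3) * g (j+1)))|
            = |(a^(2*p+3) * ((a-1)⁻¹)^(2*p+3) * (π⁻¹)^(2*p+3) * g (j-1))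
                - (a^(2*p+3) * ((a+1)⁻¹)^(2*p+3) * (π⁻¹)^(2*p+3) * g (j+1))| := by
              rw [abs_mul, abs_neg, habs1 (p+1), one_mul]
          _ ≤ _ + _ := abs_sub _ _
          _ ≤ C2 * |g (j-1)| + C2 * |g (j+1)| := add_le_add hb1 hb2
    · have t1 : Tendsto (fun j : ℕ => Cq * |hfun j|) atTop (𝓝 0) := by
        have := (hfun0.abs).const_mul Cq
        simpa using this
      have t2 : Tendsto (fun j : ℕ => C2 * |g (j-1)|) atTop (𝓝 0) := by
        have := ((hg.comp (tendsto_sub_atTop_nat 1)).abs).const_mul C2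
        simpa [Function.comp] using this
      have t3 : Tendsto (fun j : ℕ => C2 * |g (j+1)|) atTop (𝓝 0) := by
        have := ((hg.comp (tendsto_add_atTop_nat 1)).abs).const_mul C2
        simpa [Function.comp] using this
      simpa using t1.add (t2.add t3)
  have hCpne : Cp ≠ 0 := by
    rw [hCp]
    apply div_ne_zero
    · apply mul_ne_zero
      · exact pow_ne_zero _ (by norm_num)
      · positivity
    · positivity
  have hparity : ∀ j : ℕ, Even j → ((-1:ℝ))^(j+1) = -1 := by
    intro j hj
    exact (hj.add_one).neg_one_pow
  have hparity' : ∀ j : ℕ, Odd j → ((-1:ℝ))^(j+1) = 1 := by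
    intro j hj
    exact (hj.add_one).neg_one_pow
  refine ⟨hT, ?_⟩
  intro J hJ1 hJe hJo
  constructor
  · rintro ⟨c, hc, hcl⟩
    have third : ∀ j ∈ J, muCoef μ j ≠ 0 := by
      intro j hjJ h0
      have h1j : 1 ≤ j := hJ1 j hjJ
      have hjpos : (0:ℝ) < (j:ℝ)^(2*p+3) := by
        have : (0:ℝ) < (j:ℝ) := by exact_mod_cast Nat.lt_of_lt_of_le Nat.zero_lt_one h1j
        positivity
      have := hcl j hjJ
      rw [h0, abs_zero] at this
      have := div_pos hc hjpos
      linarith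
    obtain ⟨N, hN⟩ := Metric.tendsto_atTop.mp hT c hc
    refine ⟨?_, ?_, third⟩
    · intro h0
      obtain ⟨j, hjmem, hjN⟩ := hJe.exists_gt N
      have hjJ : j ∈ J := hjmem.1
      have hjeven : Even j := hjmem.2
      have h1j : 1 ≤ j := hJ1 j hjJ
      have hjpos : (0:ℝ) < (j:ℝ)^(2*p+3) := by
        have : (0:ℝ) < (j:ℝ) := by exact_mod_cast Nat.lt_of_lt_of_le Nat.zero_lt_one h1j
        positivity
      have hd := hN j (le_of_lt hjN)
      rw [Real.dist_eq, sub_zero] at hd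
      rw [hparity j hjeven] at hd
      have hL0 : Cp * ((-1:ℝ) * c1 - c0) = 0 := by
        have : (-1:ℝ) * c1 - c0 = -(c0 + c1) := by ring
        rw [this, h0]; ring
      rw [hL0, sub_zero] at hd
      have hge := hcl j hjJ
      rw [div_le_iff₀ hjpos] at hge
      rw [abs_mul, abs_of_nonneg (le_of_lt hjpos)] at hd
      nlinarith [abs_nonneg (muCoef μ j)]
    · intro h0
      obtain ⟨j, hjmem, hjN⟩ := hJo.exists_gt N
      have hjJ : j ∈ J := hjmem.1
      have hjodd : Odd j := hjmem.2
      have h1j : 1 ≤ j := hJ1 j hjJ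
      have hjpos : (0:ℝ) < (j:ℝ)^(2*p+3) := by
        have : (0:ℝ) < (j:ℝ) := by exact_mod_cast Nat.lt_of_lt_of_le Nat.zero_lt_one h1j
        positivity
      have hd := hN j (le_of_lt hjN)
      rw [Real.dist_eq, sub_zero] at hd
      rw [hparity' j hjodd] at hd
      have hL0 : Cp * ((1:ℝ) * c1 - c0) = 0 := by
        have : (1:ℝ) * c1 - c0 = -(c0 - c1) := by ring
        rw [this, h0]; ring
      rw [hL0, sub_zero] at hd
      have hge := hcl j hjJ
      rw [div_le_iff₀ hjpos] at hge
      rw [abs_mul, abs_of_nonneg (le_of_lt hjpos)] at hd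
      nlinarith [abs_nonneg (muCoef μ j)]
  · rintro ⟨h0, h1, hne⟩
    set δ0 : ℝ := min (|Cp| * |c0 + c1|) (|Cp| * |c0 - c1|) with hδ0def
    have hδ0 : 0 < δ0 := by
      apply lt_min
      · exact mul_pos (abs_pos.mpr hCpne) (abs_pos.mpr h0)
      · exact mul_pos (abs_pos.mpr hCpne) (abs_pos.mpr h1)
    have hL : ∀ j : ℕ, δ0 ≤ |Cp * ((-1:ℝ)^(j+1) * c1 - c0)| := by
      intro j
      rcases Nat.even_or_odd j with hj | hj
      · rw [hparity j hj]
        have : Cp * ((-1:ℝ) * c1 - c0) = -(Cp * (c0 + c1)) := by ring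
        rw [this, abs_neg, abs_mul]
        exact min_le_left _ _
      · rw [hparity' j hj]
        have : Cp * ((1:ℝ) * c1 - c0) = -(Cp * (c0 - c1)) := by ring
        rw [this, abs_neg, abs_mul]
        exact min_le_right _ _
    obtain ⟨N, hN⟩ := Metric.tendsto_atTop.mp hT (δ0/2) (by linarith)
    have hbig : ∀ j ∈ J, N ≤ j → δ0/2 ≤ (j:ℝ)^(2*p+3) * |muCoef μ j| := by
      intro j hjJ hjN
      have hd := hN j hjN
      rw [Real.dist_eq, sub_zero] at hd
      have hLj := hL j
      have habs : |(j:ℝ)^(2*p+3) * muCoef μ j| = (j:ℝ)^(2*p+3) * |muCoef μ j| := by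
        rw [abs_mul, abs_of_nonneg (by positivity : (0:ℝ) ≤ (j:ℝ)^(2*p+3))]
      have htri : |Cp * ((-1:ℝ)^(j+1) * c1 - c0)| - |(j:ℝ)^(2*p+3) * muCoef μ j|
          ≤ |(j:ℝ)^(2*p+3) * muCoef μ j - Cp * ((-1:ℝ)^(j+1) * c1 - c0)| := by
        have := abs_sub_abs_le_abs_sub (Cp * ((-1:ℝ)^(j+1) * c1 - c0))
          ((j:ℝ)^(2*p+3) * muCoef μ j)
        calc |Cp * ((-1:ℝ)^(j+1) * c1 - c0)| - |(j:ℝ)^(2*p+3) * muCoef μ j|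
            ≤ |Cp * ((-1:ℝ)^(j+1) * c1 - c0) - (j:ℝ)^(2*p+3) * muCoef μ j| := this
          _ = |(j:ℝ)^(2*p+3) * muCoef μ j - Cp * ((-1:ℝ)^(j+1) * c1 - c0)| := abs_sub_comm _ _
      rw [habs] at htri
      linarith
    have hsmall : ∀ N' : ℕ, ∃ c > (0:ℝ), ∀ j ∈ J, j < N' →
        c ≤ (j:ℝ)^(2*p+3) * |muCoef μ j| := by
      intro N'
      induction N' with
      | zero => exact ⟨1, one_pos, fun j _ h => absurd h (Nat.not_lt_zero j)⟩
      | succ M ih =>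
        obtain ⟨c, hcpos, hcle⟩ := ih
        by_cases hM : M ∈ J
        · have h1M : 1 ≤ M := hJ1 M hM
          have hMpos : (0:ℝ) < (M:ℝ)^(2*p+3) := by
            have : (0:ℝ) < (M:ℝ) := by exact_mod_cast Nat.lt_of_lt_of_le Nat.zero_lt_one h1M
            positivity
          have hpos : 0 < (M:ℝ)^(2*p+3) * |muCoef μ M| :=
            mul_pos hMpos (abs_pos.mpr (hne M hM))
          refine ⟨min c ((M:ℝ)^(2*p+3) * |muCoef μ M|), lt_min hcpos hpos, ?_⟩
          intro j hjJ hjM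
          rcases Nat.lt_succ_iff_lt_or_eq.mp hjM with h | h
          · exact le_trans (min_le_left _ _) (hcle j hjJ h)
          · subst h; exact min_le_right _ _
        · refine ⟨c, hcpos, fun j hjJ hjM => ?_⟩
          rcases Nat.lt_succ_iff_lt_or_eq.mp hjM with h | h
          · exact hcle j hjJ h
          · subst h; exact absurd hjJ hM
    obtain ⟨c, hcpos, hcle⟩ := hsmall N
    refine ⟨min c (δ0/2), lt_min hcpos (by linarith), ?_⟩
    intro j hjJ
    have h1j : 1 ≤ j := hJ1 j hjJ
    have hjpos : (0:ℝ) < (j:ℝ)^(2*p+3) := by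
      have : (0:ℝ) < (j:ℝ) := by exact_mod_cast Nat.lt_of_lt_of_le Nat.zero_lt_one h1j
      positivity
    rw [div_le_iff₀ hjpos]
    rcases lt_or_ge j N with h | h
    · have hj' := hcle j hjJ h
      calc min c (δ0/2) ≤ c := min_le_left _ _
        _ ≤ (j:ℝ)^(2*p+3) * |muCoef μ j| := hj'
        _ = |muCoef μ j| * (j:ℝ)^(2*p+3) := mul_comm _ _
    · have hj' := hbig j hjJ h
      calc min c (δ0/2) ≤ δ0/2 := min_le_right _ _
        _ ≤ (j:ℝ)^(2*p+3) * |muCoef μ j| := hj'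
        _ = |muCoef μ j| * (j:ℝ)^(2*p+3) := mul_comm _ _


end
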